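/- Let X, Y be real Banach spaces and T : X → Y a bounded linear operator which is not Tauberian. Then for every ε > 0 there exists a (1+ε)-wide-(s) sequence (b_j) in X such that (Tb_j) converges in norm. -/

import Mathlib

open Finset Filter Metric NormedSpace

noncomputable section

universe u

variable {X Y : Type*} [NormedAddCommGroup X] [NormedSpace ℝ X]
  [NormedAddCommGroup Y] [NormedSpace ℝ Y]

/-- `b` is a `lam`-basic sequence: for all scalars `c` and all `k ≤ n`,
`‖∑_{j<k} c_j b_j‖ ≤ lam * ‖∑_{j<n} c_j b_j‖`. -/
def IsBasicWith (lam : ℝ) (b : ℕ → X) : Prop :=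
  ∀ (c : ℕ → ℝ) (k n : ℕ), k ≤ n →
    ‖∑ j ∈ Finset.range k, c j • b j‖ ≤ lam * ‖∑ j ∈ Finset.range n, c j • b j‖

/-- `b` is a `lam`-wide-(s) sequence: it is `2lam`-basic, `‖b j‖ ≤ lam` for all `j`,
and `|∑_{k≤j<n} c_j| ≤ lam * ‖∑_{j<n} c_j b_j‖` for all scalars and `k ≤ n`. -/
def IsWideSWith (lam : ℝ) (b : ℕ → X) : Prop :=
  IsBasicWith (2 * lam) b ∧ (∀ j, ‖b j‖ ≤ lam) ∧
    ∀ (c : ℕ → ℝ) (k n : ℕ), k ≤ n →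
      |∑ j ∈ Finset.Ico k n, c j| ≤ lam * ‖∑ j ∈ Finset.range n, c j • b j‖

/-- The adjoint (dual map) of a bounded linear operator. -/
def dualOp (T : X →L[ℝ] Y) : StrongDual ℝ Y →L[ℝ] StrongDual ℝ X :=
  (ContinuousLinearMap.compL ℝ X Y ℝ).flip T

/-- `T` is Tauberian: whenever `T** x**` lies in (the canonical image of) `Y`,
`x**` lies in (the canonical image of) `X`. -/
def IsTauberian (T : X →L[ℝ] Y) : Prop :=
  ∀ F : StrongDual ℝ (StrongDual ℝ X),
    dualOp (dualOp T) F ∈ Set.range (inclusionInDoubleDual ℝ Y) →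
      F ∈ Set.range (inclusionInDoubleDual ℝ X)

/-- The topological dual, as in the older `NormedSpace.Dual`. -/
abbrev Dual (𝕜 : Type*) [NontriviallyNormedField 𝕜] (E : Type*) [SeminormedAddCommGroup E]
    [NormedSpace 𝕜 E] : Type _ := E →L[𝕜] 𝕜

section AuxHelly

variable {E : Type*} [NormedAddCommGroup E] [NormedSpace ℝ E]

/-- Bounded right inverse for a finite-rank operator into `Fin m → ℝ`. -/
lemma aux_right_inverse {m : ℕ} (S : E →L[ℝ] (Fin m → ℝ)) :
    ∃ C : ℝ, 0 < C ∧ ∀ v ∈ LinearMap.range (S : E →ₗ[ℝ] (Fin m → ℝ)),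
      ∃ z : E, S z = v ∧ ‖z‖ ≤ C * ‖v‖ := by
  set R : Submodule ℝ (Fin m → ℝ) := LinearMap.range (S : E →ₗ[ℝ] (Fin m → ℝ)) with hR
  haveI : FiniteDimensional ℝ R := inferInstance
  set d := Module.finrank ℝ R
  let Bas : Module.Basis (Fin d) ℝ R := Module.finBasis ℝ R
  have hu : ∀ i : Fin d, ∃ u : E, S u = (Bas i : Fin m → ℝ) := by
    intro i
    exact (Bas i).2
  choose u hu using hu
  let coordC : Fin d → (R →L[ℝ] ℝ) := fun i => LinearMap.toContinuousLinearMap (Bas.coord i)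
  refine ⟨∑ i, ‖coordC i‖ * ‖u i‖ + 1, by positivity, ?_⟩
  intro v hv
  set r : R := ⟨v, hv⟩
  refine ⟨∑ i, (Bas.coord i r) • u i, ?_, ?_⟩
  · rw [map_sum]
    have : ∀ i, S ((Bas.coord i r) • u i) = (Bas.coord i r) • (Bas i : Fin m → ℝ) := by
      intro i; rw [map_smul, hu]
    rw [Finset.sum_congr rfl fun i _ => this i]
    have := Bas.sum_repr r
    calc ∑ i, (Bas.coord i r) • (Bas i : Fin m → ℝ)
        = ((∑ i, (Bas.repr r i) • (Bas i) : R) : Fin m → ℝ) := by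
          push_cast [Submodule.coe_sum]
          rfl
      _ = v := by rw [this]
  · calc ‖∑ i, (Bas.coord i r) • u i‖ ≤ ∑ i, ‖(Bas.coord i r) • u i‖ := norm_sum_le _ _
      _ ≤ ∑ i, (‖coordC i‖ * ‖u i‖) * ‖v‖ := by
          refine Finset.sum_le_sum fun i _ => ?_
          rw [norm_smul]
          have h1 : ‖Bas.coord i r‖ ≤ ‖coordC i‖ * ‖r‖ := (coordC i).le_opNorm r
          have hrv : ‖r‖ = ‖v‖ := rfl
          rw [hrv] at h1
          calc ‖Bas.coord i r‖ * ‖u i‖ ≤ (‖coordC i‖ * ‖v‖) * ‖u i‖ :=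
                mul_le_mul_of_nonneg_right h1 (norm_nonneg _)
            _ = (‖coordC i‖ * ‖u i‖) * ‖v‖ := by ring
      _ = (∑ i, ‖coordC i‖ * ‖u i‖) * ‖v‖ := by rw [Finset.sum_mul]
      _ ≤ (∑ i, ‖coordC i‖ * ‖u i‖ + 1) * ‖v‖ := by
          have := norm_nonneg v; nlinarith [Finset.sum_nonneg (fun i (_ : i ∈ Finset.univ) =>
            mul_nonneg (norm_nonneg (coordC i)) (norm_nonneg (u i)))]

lemma aux_mem_closure (G : Dual ℝ (Dual ℝ E)) {m : ℕ} (f : Fin m → Dual ℝ E) :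
    (fun i => G (f i)) ∈
      closure ((ContinuousLinearMap.pi f) '' Metric.closedBall (0 : E) ‖G‖) := by
  set S := ContinuousLinearMap.pi f
  set a : Fin m → ℝ := fun i => G (f i)
  by_contra h
  have hconv : Convex ℝ (closure (S '' Metric.closedBall (0 : E) ‖G‖)) :=
    ((convex_closedBall (0:E) ‖G‖).linear_image (S : E →ₗ[ℝ] (Fin m → ℝ))).closure
  obtain ⟨φ, u, hφ1, hφ2⟩ := geometric_hahn_banach_closed_point hconv isClosed_closure h
  set g : Dual ℝ E := φ.comp S with hg
  have hexp : g = ∑ i, φ (Pi.single i 1) • f i := by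
    ext x
    have : S x = ∑ i, (f i x) • (Pi.single i 1 : Fin m → ℝ) := by
      ext j
      simp [S, ContinuousLinearMap.pi_apply, Pi.single_apply, Finset.sum_apply]
    simp only [hg, ContinuousLinearMap.comp_apply, this, map_sum, map_smul]
    simp [ContinuousLinearMap.sum_apply, smul_eq_mul, mul_comm]
  have hGg : G g = φ a := by
    rw [hexp, map_sum]
    have : φ a = φ (∑ i, (a i) • (Pi.single i 1 : Fin m → ℝ)) := by
      congr 1
      ext j
      simp [Pi.single_apply, Finset.sum_apply]
    rw [this, map_sum]
    refine Finset.sum_congr rfl fun i _ => ?_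
    simp [a, smul_eq_mul, mul_comm]
  have hball : ∀ x : E, ‖x‖ ≤ ‖G‖ → g x < u := by
    intro x hx
    have : S x ∈ closure (S '' Metric.closedBall (0 : E) ‖G‖) :=
      subset_closure ⟨x, by simpa [Metric.mem_closedBall, dist_zero_right] using hx, rfl⟩
    exact hφ1 _ this
  have hu0 : 0 < u := by
    have := hball 0 (by simp)
    simpa using this
  have hkey : ‖G‖ * ‖g‖ ≤ u := by
    rcases eq_or_lt_of_le (norm_nonneg G) with hG0 | hG0
    · rw [← hG0]; simpa using hu0.le
    · have hgle : ‖g‖ ≤ u / ‖G‖ := by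
        refine ContinuousLinearMap.opNorm_le_bound _ (by positivity) fun x => ?_
        rcases eq_or_ne x 0 with rfl | hx0
        · simp
        · have hxn : 0 < ‖x‖ := norm_pos_iff.mpr hx0
          have h1 : g ((‖G‖ / ‖x‖) • x) < u := by
            refine hball _ ?_
            rw [norm_smul, Real.norm_eq_abs, abs_of_nonneg (by positivity)]
            field_simp
            exact le_rfl
          have h2 : g (-((‖G‖ / ‖x‖) • x)) < u := by
            refine hball _ ?_
            rw [norm_neg, norm_smul, Real.norm_eq_abs, abs_of_nonneg (by positivity)]
            field_simp
            exact le_rfl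
          have h3 : |g ((‖G‖ / ‖x‖) • x)| ≤ u := by
            rw [abs_le]; constructor
            · have := h2; rw [map_neg] at this; linarith
            · linarith
          rw [map_smul, smul_eq_mul, abs_mul, abs_of_nonneg (by positivity)] at h3
          have : |g x| ≤ u * ‖x‖ / ‖G‖ := by
            rw [le_div_iff₀ hG0]
            calc |g x| * ‖G‖ = (‖G‖ / ‖x‖ * |g x|) * ‖x‖ := by field_simp
              _ ≤ u * ‖x‖ := mul_le_mul_of_nonneg_right h3 hxn.le
          calc ‖g x‖ = |g x| := rfl
            _ ≤ u * ‖x‖ / ‖G‖ := this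
            _ = u / ‖G‖ * ‖x‖ := by ring
      calc ‖G‖ * ‖g‖ ≤ ‖G‖ * (u / ‖G‖) := by
            exact mul_le_mul_of_nonneg_left hgle (norm_nonneg _)
        _ = u := by field_simp
  have : φ a ≤ u := by
    rw [← hGg]
    calc G g ≤ |G g| := le_abs_self _
      _ = ‖G g‖ := rfl
      _ ≤ ‖G‖ * ‖g‖ := G.le_opNorm g
      _ ≤ u := hkey
  linarith

/-- Helly's theorem: finitely many linear constraints given by a bidual element can be realized
by an element of the space with an arbitrarily small increase of the norm. -/
lemma aux_helly (G : Dual ℝ (Dual ℝ E)) (lst : List (Dual ℝ E)) {r : ℝ} (hr : ‖G‖ < r) :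
    ∃ x : E, ‖x‖ ≤ r ∧ ∀ φ ∈ lst, φ x = G φ := by
  set m := lst.length
  set f : Fin m → Dual ℝ E := fun i => lst.get i
  set S := ContinuousLinearMap.pi f with hS
  set a : Fin m → ℝ := fun i => G (f i) with ha
  obtain ⟨C, hC, hinv⟩ := aux_right_inverse S
  have hcl := aux_mem_closure G f
  have hrange : ∀ w : E, S w ∈ LinearMap.range (S : E →ₗ[ℝ] (Fin m → ℝ)) :=
    fun w => ⟨w, rfl⟩
  have haR : a ∈ LinearMap.range (S : E →ₗ[ℝ] (Fin m → ℝ)) := by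
    have h1 : closure ((S : E → Fin m → ℝ) '' Metric.closedBall (0 : E) ‖G‖) ⊆
        closure (LinearMap.range (S : E →ₗ[ℝ] (Fin m → ℝ)) : Set (Fin m → ℝ)) := by
      apply closure_mono
      rintro v ⟨w, _, rfl⟩
      exact hrange w
    have h2 : IsClosed (LinearMap.range (S : E →ₗ[ℝ] (Fin m → ℝ)) : Set (Fin m → ℝ)) :=
      Submodule.closed_of_finiteDimensional _
    have := h1 hcl
    rwa [h2.closure_eq] at this
  have hε : 0 < (r - ‖G‖) / C := by
    have : 0 < r - ‖G‖ := by linarith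
    positivity
  obtain ⟨vv, hvv, hdist⟩ := Metric.mem_closure_iff.mp hcl ((r - ‖G‖)/C) hε
  obtain ⟨x₀, hx₀mem, rfl⟩ := hvv
  obtain ⟨z, hz1, hz2⟩ := hinv (a - S x₀) (Submodule.sub_mem _ haR (hrange x₀))
  refine ⟨x₀ + z, ?_, ?_⟩
  · have h1 : ‖x₀‖ ≤ ‖G‖ := by simpa [Metric.mem_closedBall, dist_zero_right] using hx₀mem
    have h2 : ‖a - S x₀‖ < (r - ‖G‖)/C := by
      rwa [dist_eq_norm] at hdist
    have h3 : ‖z‖ ≤ r - ‖G‖ := by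
      calc ‖z‖ ≤ C * ‖a - S x₀‖ := hz2
        _ ≤ C * ((r - ‖G‖)/C) := mul_le_mul_of_nonneg_left h2.le hC.le
        _ = r - ‖G‖ := by field_simp
    calc ‖x₀ + z‖ ≤ ‖x₀‖ + ‖z‖ := norm_add_le _ _
      _ ≤ r := by linarith
  · have hSx : S (x₀ + z) = a := by rw [map_add, hz1]; abel
    intro φ hφ
    obtain ⟨i, hi⟩ := List.get_of_mem hφ
    have := congrFun hSx i
    rw [hS] at this
    simp only [ContinuousLinearMap.pi_apply] at this
    rw [← hi]
    exact this

/-- Near-norming element of the predual. -/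
lemma aux_norming_point (G : Dual ℝ E) {κ : ℝ} (hκ : κ < 1) :
    ∃ h : E, ‖h‖ ≤ 1 ∧ κ * ‖G‖ ≤ G h := by
  rcases le_or_gt κ 0 with hκ0 | hκ0
  · exact ⟨0, by simp, by simpa using mul_nonpos_of_nonpos_of_nonneg hκ0 (norm_nonneg G)⟩
  rcases eq_or_ne G 0 with rfl | hG0
  · exact ⟨0, by simp⟩
  have hGn : 0 < ‖G‖ := norm_pos_iff.mpr hG0
  have : κ * ‖G‖ < ‖G‖ := by nlinarith
  obtain ⟨x, hx1, hx2⟩ := ContinuousLinearMap.exists_lt_apply_of_lt_opNorm G this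
  rcases le_or_gt 0 (G x) with hs | hs
  · refine ⟨x, hx1.le, ?_⟩
    rw [Real.norm_eq_abs, abs_of_nonneg hs] at hx2
    linarith
  · refine ⟨-x, by simpa using hx1.le, ?_⟩
    rw [Real.norm_eq_abs, abs_of_neg hs] at hx2
    rw [map_neg]
    linarith

/-- A finite norming set for a finite-dimensional subspace of the dual. -/
lemma aux_norming_set (s : Set (Dual ℝ E)) (hs : s.Finite) {κ : ℝ} (hκ : κ < 1) :
    ∃ H : Set E, H.Finite ∧ (∀ h ∈ H, ‖h‖ ≤ 1) ∧
      ∀ G ∈ Submodule.span ℝ s, ∃ h ∈ H, κ * ‖G‖ ≤ G h := by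
  rcases le_or_gt κ 0 with hκ0 | hκ0
  · refine ⟨{0}, Set.finite_singleton _, by simp, fun G _ => ⟨0, rfl, ?_⟩⟩
    simpa using mul_nonpos_of_nonpos_of_nonneg hκ0 (norm_nonneg G)
  set W := Submodule.span ℝ s with hW
  haveI : FiniteDimensional ℝ W := FiniteDimensional.span_of_finite ℝ hs
  set ν := (1 - κ)/4 with hν
  have hν0 : 0 < ν := by rw [hν]; linarith
  have hcomp : IsCompact (Metric.sphere (0 : W) 1) := isCompact_sphere _ _
  obtain ⟨t, htfin, htcov⟩ := Metric.totallyBounded_iff.mp hcomp.totallyBounded ν hν0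
  have hpick : ∀ G₀ : W, ∃ h : E, ‖h‖ ≤ 1 ∧ (1 - ν) * ‖(G₀ : Dual ℝ E)‖ ≤ (G₀ : Dual ℝ E) h :=
    fun G₀ => aux_norming_point (G₀ : Dual ℝ E) (by linarith)
  choose pick hpick1 hpick2 using hpick
  refine ⟨insert 0 (pick '' t), ((htfin.image _).insert 0), ?_, ?_⟩
  · rintro h (rfl | ⟨G₀, _, rfl⟩)
    · simp
    · exact hpick1 _
  intro G hG
  rcases eq_or_ne G 0 with rfl | hG0
  · exact ⟨0, Set.mem_insert _ _, by simp⟩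
  have hGn : 0 < ‖G‖ := norm_pos_iff.mpr hG0
  set Gh : W := (‖G‖)⁻¹ • ⟨G, hG⟩ with hGh
  have hGhs : Gh ∈ Metric.sphere (0 : W) 1 := by
    simp only [mem_sphere_iff_norm, sub_zero]
    have : ‖Gh‖ = ‖(Gh : Dual ℝ E)‖ := rfl
    show ‖(Gh : Dual ℝ E)‖ = 1
    simp only [hGh, Submodule.coe_smul]
    rw [norm_smul, Real.norm_eq_abs, abs_of_nonneg (by positivity)]
    field_simp
  obtain ⟨G₀, hG₀t, hG₀d⟩ := Set.mem_iUnion₂.mp (htcov hGhs)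
  have hdist : ‖(Gh : Dual ℝ E) - (G₀ : Dual ℝ E)‖ < ν := by
    have : dist Gh G₀ < ν := Metric.mem_ball.mp hG₀d
    rw [dist_eq_norm] at this
    exact this
  have hG₀n : 1 - ν ≤ ‖(G₀ : Dual ℝ E)‖ := by
    have h1 : ‖(Gh : Dual ℝ E)‖ = 1 := by
      have := Metric.mem_sphere.mp hGhs
      rw [dist_zero_right] at this
      exact this
    have := norm_sub_norm_le (Gh : Dual ℝ E) (G₀ : Dual ℝ E)
    rw [h1] at this
    linarith
  refine ⟨pick G₀, Set.mem_insert_of_mem _ ⟨G₀, hG₀t, rfl⟩, ?_⟩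
  have hkey : κ ≤ (Gh : Dual ℝ E) (pick G₀) := by
    have h1 : (1 - ν) * ‖(G₀ : Dual ℝ E)‖ ≤ (G₀ : Dual ℝ E) (pick G₀) := hpick2 G₀
    have h2 : |((Gh : Dual ℝ E) - (G₀ : Dual ℝ E)) (pick G₀)| ≤ ν := by
      calc |((Gh : Dual ℝ E) - (G₀ : Dual ℝ E)) (pick G₀)|
          ≤ ‖(Gh : Dual ℝ E) - (G₀ : Dual ℝ E)‖ * ‖pick G₀‖ :=
            ((Gh : Dual ℝ E) - (G₀ : Dual ℝ E)).le_opNorm _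
        _ ≤ ν * 1 := by
            apply mul_le_mul hdist.le (hpick1 G₀) (norm_nonneg _) hν0.le
        _ = ν := mul_one ν
    have h3 : (Gh : Dual ℝ E) (pick G₀) ≥ (G₀ : Dual ℝ E) (pick G₀) - ν := by
      have := abs_le.mp h2
      have hsub : ((Gh : Dual ℝ E) - (G₀ : Dual ℝ E)) (pick G₀) =
        (Gh : Dual ℝ E) (pick G₀) - (G₀ : Dual ℝ E) (pick G₀) := rfl
      rw [hsub] at this
      linarith [this.1]
    have h4 : ‖(G₀ : Dual ℝ E)‖ ≤ 1 + ν := by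
      have h1' : ‖(Gh : Dual ℝ E)‖ = 1 := by
        have := Metric.mem_sphere.mp hGhs
        rw [dist_zero_right] at this
        exact this
      have := norm_sub_norm_le (G₀ : Dual ℝ E) (Gh : Dual ℝ E)
      rw [h1', ← norm_neg ((G₀ : Dual ℝ E) - (Gh : Dual ℝ E)), neg_sub] at this
      linarith
    nlinarith
  have hdecomp : (Gh : Dual ℝ E) = (‖G‖)⁻¹ • G := rfl
  rw [hdecomp] at hkey
  simp only [ContinuousLinearMap.smul_apply, smul_eq_mul] at hkey
  calc κ * ‖G‖ ≤ ((‖G‖)⁻¹ * G (pick G₀)) * ‖G‖ := mul_le_mul_of_nonneg_right hkey hGn.le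
    _ = G (pick G₀) := by field_simp

end AuxHelly

lemma dualOp_apply (T : X →L[ℝ] Y) (g : Dual ℝ Y) : dualOp T g = g.comp T := by
  simp [dualOp, ContinuousLinearMap.flip_apply, ContinuousLinearMap.compL_apply]

lemma dualOp_dualOp_apply (T : X →L[ℝ] Y) (G : Dual ℝ (Dual ℝ X)) (g : Dual ℝ Y) :
    dualOp (dualOp T) G g = G (g.comp T) := by
  rw [dualOp_apply (dualOp T) G]
  simp only [ContinuousLinearMap.comp_apply]
  rw [dualOp_apply]

lemma dualOp_dualOp_J (T : X →L[ℝ] Y) (x : X) :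
    dualOp (dualOp T) (inclusionInDoubleDual ℝ X x) = inclusionInDoubleDual ℝ Y (T x) := by
  ext g
  rw [dualOp_dualOp_apply, NormedSpace.dual_def, NormedSpace.dual_def,
    ContinuousLinearMap.comp_apply]

/-- Helly's theorem with the extra requirement that `T x` is close to `y`, where `y` represents
`T** G`. -/
lemma aux_hellyT (T : X →L[ℝ] Y) (G : Dual ℝ (Dual ℝ X)) {y : Y}
    (hG : dualOp (dualOp T) G = inclusionInDoubleDual ℝ Y y)
    (lst : List (Dual ℝ X)) {r δ : ℝ} (hr : ‖G‖ < r) (hδ : 0 < δ) :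
    ∃ x : X, ‖x‖ ≤ r ∧ (∀ φ ∈ lst, φ x = G φ) ∧ ‖T x - y‖ < δ := by
  by_contra hcon
  push_neg at hcon
  set C : Set X := {x | ‖x‖ ≤ r ∧ ∀ φ ∈ lst, φ x = G φ} with hC
  have hfar : ∀ x ∈ C, δ ≤ ‖T x - y‖ := fun x hx => hcon x hx.1 hx.2
  have hCconv : Convex ℝ C := by
    intro x hx z hz p q hp hq hpq
    constructor
    · calc ‖p • x + q • z‖ ≤ ‖p • x‖ + ‖q • z‖ := norm_add_le _ _
        _ = p * ‖x‖ + q * ‖z‖ := by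
            rw [norm_smul, norm_smul, Real.norm_eq_abs, Real.norm_eq_abs,
              abs_of_nonneg hp, abs_of_nonneg hq]
        _ ≤ p * r + q * r := by
            have h1 : p * ‖x‖ ≤ p * r := mul_le_mul_of_nonneg_left hx.1 hp
            have h2 : q * ‖z‖ ≤ q * r := mul_le_mul_of_nonneg_left hz.1 hq
            linarith
        _ = r := by rw [← add_mul, hpq, one_mul]
    · intro φ hφ
      rw [map_add, map_smul, map_smul, hx.2 φ hφ, hz.2 φ hφ, smul_eq_mul, smul_eq_mul,
        ← add_mul, hpq, one_mul]
  have hTCconv : Convex ℝ (closure ((T : X →ₗ[ℝ] Y) '' C)) :=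
    (hCconv.linear_image (T : X →ₗ[ℝ] Y)).closure
  have hynot : y ∉ closure ((T : X →ₗ[ℝ] Y) '' C) := by
    intro hy
    obtain ⟨z, hz, hdz⟩ := Metric.mem_closure_iff.mp hy δ hδ
    obtain ⟨x, hx, rfl⟩ := hz
    have := hfar x hx
    rw [dist_eq_norm] at hdz
    rw [← norm_neg] at hdz
    simp only [neg_sub] at hdz
    simp only [ContinuousLinearMap.coe_coe] at hdz
    linarith
  obtain ⟨g, u, hg1, hg2⟩ := geometric_hahn_banach_closed_point hTCconv isClosed_closure hynot
  obtain ⟨x, hx1, hx2⟩ := aux_helly G (g.comp T :: lst) hr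
  have hxC : x ∈ C := ⟨hx1, fun φ hφ => hx2 φ (List.mem_cons_of_mem _ hφ)⟩
  have h1 : (g.comp T) x = G (g.comp T) := hx2 _ List.mem_cons_self
  have h2 : G (g.comp T) = g y := by
    have := congrFun (congrArg (fun (h : Dual ℝ (Dual ℝ Y)) => (h : Dual ℝ Y → ℝ)) hG) g
    rw [← dualOp_dualOp_apply T G g, this, NormedSpace.dual_def]
  have h3 : g (T x) < u := hg1 _ (subset_closure ⟨x, hxC, rfl⟩)
  have h4 : g (T x) = g y := by
    rw [← h2, ← h1]; rfl
  rw [h4] at h3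
  linarith

/-- From a non-Tauberian operator we extract a normalized bidual element `F` outside `X`,
a norming functional `Φ` vanishing on `X`, and `y` representing `T** F`. -/
lemma aux_setup [CompleteSpace X] (T : X →L[ℝ] Y)
    (hT : ¬ IsTauberian T) {θ : ℝ} (hθ0 : 0 < θ) :
    ∃ (F : Dual ℝ (Dual ℝ X)) (Φ : Dual ℝ (Dual ℝ (Dual ℝ X))) (y : Y),
      ‖F‖ < 1 + θ ∧ ‖Φ‖ ≤ 1 ∧ Φ F = 1 ∧
      (∀ x : X, Φ (inclusionInDoubleDual ℝ X x) = 0) ∧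
      dualOp (dualOp T) F = inclusionInDoubleDual ℝ Y y := by
  simp only [IsTauberian, not_forall] at hT
  obtain ⟨F₀, hmem, hnot⟩ := hT
  obtain ⟨y₀, hy₀⟩ := hmem
  set J := inclusionInDoubleDual ℝ X with hJ
  set M : Submodule ℝ (Dual ℝ (Dual ℝ X)) :=
    LinearMap.range (J : X →ₗ[ℝ] Dual ℝ (Dual ℝ X)) with hM
  have hMset : (M : Set (Dual ℝ (Dual ℝ X))) = Set.range ⇑J := by
    rw [hM]; exact LinearMap.coe_range _
  have hJnorm : ∀ x : X, ‖J x‖ = ‖x‖ := fun x => (inclusionInDoubleDualLi ℝ (E := X)).norm_map x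
  have hJiso : Isometry ⇑J := (inclusionInDoubleDualLi ℝ (E := X)).isometry
  haveI hMclosed : IsClosed (M : Set (Dual ℝ (Dual ℝ X))) := by
    rw [hMset]
    exact hJiso.isClosedEmbedding.isClosed_range
  set v : (Dual ℝ (Dual ℝ X)) ⧸ M := Submodule.Quotient.mk F₀ with hv
  have hvne : v ≠ 0 := by
    rw [hv, Ne, Submodule.Quotient.mk_eq_zero]
    intro hmem'
    rw [← SetLike.mem_coe, hMset] at hmem'
    exact hnot hmem'
  set d := ‖v‖ with hd
  have hd0 : 0 < d := by rw [hd]; exact (norm_pos_iff (a := v)).mpr hvne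
  obtain ⟨g, hg1, hg2⟩ := exists_dual_vector ℝ v hd0.ne'
  have hbound : ∀ z : Dual ℝ (Dual ℝ X),
      ‖(g.toLinearMap.comp M.mkQ) z‖ ≤ 1 * ‖z‖ := by
    intro z
    simp only [LinearMap.comp_apply, ContinuousLinearMap.coe_coe, Submodule.mkQ_apply, one_mul]
    calc ‖g (Submodule.Quotient.mk z)‖
        ≤ ‖g‖ * ‖(Submodule.Quotient.mk z : (Dual ℝ (Dual ℝ X)) ⧸ M)‖ := g.le_opNorm _
      _ ≤ ‖z‖ := by rw [hg1, one_mul]; exact Submodule.Quotient.norm_mk_le _ _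
  set Φ : Dual ℝ (Dual ℝ (Dual ℝ X)) :=
    (g.toLinearMap.comp M.mkQ).mkContinuous 1 hbound with hΦ
  have hΦapply : ∀ z, Φ z = g (Submodule.Quotient.mk z) := fun z => rfl
  have hΦnorm : ‖Φ‖ ≤ 1 := LinearMap.mkContinuous_norm_le _ zero_le_one _
  have hΦM : ∀ z ∈ M, Φ z = 0 := by
    intro z hz
    rw [hΦapply, (Submodule.Quotient.mk_eq_zero M).mpr hz, map_zero]
  obtain ⟨mrep, hmrep1, hmrep2⟩ := Submodule.Quotient.norm_mk_lt v (mul_pos hd0 hθ0)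
  have hdiff : mrep - F₀ ∈ M := by
    rw [← Submodule.Quotient.eq]
    exact hmrep1.trans hv
  obtain ⟨x', hx'⟩ := LinearMap.mem_range.mp hdiff
  set F : Dual ℝ (Dual ℝ X) := d⁻¹ • mrep with hF
  refine ⟨F, Φ, d⁻¹ • (y₀ + T x'), ?_, hΦnorm, ?_, ?_, ?_⟩
  · rw [hF, norm_smul, Real.norm_eq_abs, abs_of_nonneg (by positivity)]
    calc d⁻¹ * ‖mrep‖ < d⁻¹ * (d + d * θ) := by
          apply mul_lt_mul_of_pos_left _ (by positivity)
          calc ‖mrep‖ < ‖v‖ + d * θ := hmrep2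
            _ = d + d * θ := by rw [hd]
      _ = 1 + θ := by field_simp
  · rw [hF, map_smul, smul_eq_mul]
    have : Φ mrep = d := by
      rw [hΦapply, hmrep1, hd]
      exact_mod_cast hg2
    rw [this]
    field_simp
  · intro x
    apply hΦM
    rw [← SetLike.mem_coe, hMset]
    exact ⟨x, rfl⟩
  · have hmrepJ : mrep = F₀ + J x' := by
      have h0 := hx'
      simp only [ContinuousLinearMap.coe_coe] at h0
      rw [h0]
      abel
    have h1 : dualOp (dualOp T) mrep = inclusionInDoubleDual ℝ Y (y₀ + T x') := by
      rw [hmrepJ, map_add, ← hy₀, hJ, dualOp_dualOp_J, map_add]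
    rw [hF, map_smul, h1, ← map_smul]

set_option maxHeartbeats 1000000 in
/-- if `T` is not Tauberian then for every `ε > 0` there is a
`(1+ε)`-wide-(s) sequence `(b j)` in `X` with `(T (b j))` norm convergent. -/
theorem stmt_13 [CompleteSpace X] [CompleteSpace Y] (T : X →L[ℝ] Y)
    (hT : ¬ IsTauberian T) (ε : ℝ) (hε : 0 < ε) :
    ∃ b : ℕ → X, IsWideSWith (1 + ε) b ∧
      ∃ y : Y, Tendsto (fun j => T (b j)) atTop (nhds y) := by
  obtain ⟨θ, hθ0, hθε, hθ1⟩ : ∃ θ : ℝ, 0 < θ ∧ 2 * θ ≤ ε ∧ 2 * θ ≤ 1 := by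
    refine ⟨min ε 1 / 2, by positivity, ?_, ?_⟩
    · have := min_le_left ε 1; linarith
    · have := min_le_right ε 1; linarith
  obtain ⟨F, Φ, y, hFn, hΦn, hΦF, hΦJ, hTF⟩ := aux_setup T hT hθ0
  set J := inclusionInDoubleDual ℝ X with hJ
  have hJnorm : ∀ x : X, ‖J x‖ = ‖x‖ := fun x => (inclusionInDoubleDualLi ℝ (E := X)).norm_map x
  obtain ⟨Cc, hCc1, hCcle, hCcanti⟩ : ∃ Cc : ℕ → ℝ, (∀ m, 1 < Cc m) ∧
      (∀ m, Cc m ≤ 1 + θ) ∧ (∀ m, Cc (m + 1) < Cc m) := by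
    refine ⟨fun m => 1 + θ / 2 ^ (m + 1), fun m => ?_, fun m => ?_, fun m => ?_⟩
    · have : (0:ℝ) < θ / 2 ^ (m+1) := by positivity
      simp only
      linarith
    · have h2 : (1:ℝ) ≤ 2 ^ (m+1) := one_le_pow₀ (by norm_num)
      have h1 : θ / 2 ^ (m+1) ≤ θ := by
        rw [div_le_iff₀ (by positivity)]
        nlinarith [hθ0]
      simp only
      linarith
    · have h0 : (2:ℝ) ^ (m+1) < 2 ^ (m+1+1) := by
        apply pow_lt_pow_right₀ (by norm_num) (by omega)
      have h1 : θ / 2 ^ (m+1+1) < θ / 2 ^ (m+1) := by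
        apply div_lt_div_of_pos_left hθ0 (by positivity) h0
      simp only
      linarith
  -- choice of the functionals f
  have hffun : ∀ L : List X, ∃ f : Dual ℝ X, ‖f‖ ≤ 1 + θ ∧ F f = 1 ∧ ∀ x ∈ L, f x = 0 := by
    intro L
    obtain ⟨f, hf1, hf2⟩ := aux_helly (E := Dual ℝ X) Φ (F :: L.map J)
      (r := 1 + θ) (lt_of_le_of_lt hΦn (by linarith))
    refine ⟨f, hf1, ?_, ?_⟩
    · have := hf2 F List.mem_cons_self
      rw [this, hΦF]
    · intro x hx
      have := hf2 (J x) (List.mem_cons_of_mem _ (List.mem_map_of_mem hx))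
      have h2 : J x f = f x := rfl
      rw [← h2, this, hJ, hΦJ]
  choose ffun hffun1 hffun2 hffun3 using hffun
  -- choice of the norming sets H
  have hHfun : ∀ L : List X, ∃ H : Set (Dual ℝ X), H.Finite ∧ (∀ h ∈ H, ‖h‖ ≤ 1) ∧
      ∀ G ∈ Submodule.span ℝ ({F} ∪ ⇑J '' {x | x ∈ L}), ∃ h ∈ H,
        (Cc (L.length + 2) / Cc (L.length + 1)) * ‖G‖ ≤ G h := by
    intro L
    apply aux_norming_set (E := Dual ℝ X) _
      ((Set.finite_singleton F).union ((L.finite_toSet).image ⇑J))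
    rw [div_lt_one (by linarith [hCc1 (L.length + 1)])]
    exact hCcanti _
  choose Hfun hHfun_fin hHfun_norm1 hHfun_norm using hHfun
  -- bundling the constraints as a list
  set Hlist : List X → List (Dual ℝ X) := fun L => ((hHfun_fin L).toFinset).toList with hHlist
  have hHlist_mem : ∀ (L : List X) (h : Dual ℝ X), h ∈ Hlist L ↔ h ∈ Hfun L := by
    intro L h
    rw [hHlist]
    simp only [Finset.mem_toList, Set.Finite.mem_toFinset]
  set flist : List X → List (Dual ℝ X) := fun L =>
    ((List.range (L.length + 1)).map fun i => ffun (L.take i)) ++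
    (((List.range (L.length + 1)).map fun i => Hlist (L.take i)).flatten) with hflist
  -- choice of the vectors b
  have hbfun : ∀ L : List X, ∃ b : X, ‖b‖ ≤ 1 + θ ∧ (∀ φ ∈ flist L, φ b = F φ) ∧
      ‖T b - y‖ < (1/2 : ℝ) ^ L.length :=
    fun L => aux_hellyT T F hTF (flist L) hFn (by positivity)
  choose bfun hbfun1 hbfun2 hbfun3 using hbfun
  -- the sequences
  obtain ⟨bl, hbl0, hblsucc⟩ : ∃ bl : ℕ → List X, bl 0 = [] ∧
      ∀ n, bl (n + 1) = bl n ++ [bfun (bl n)] :=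
    ⟨fun n => Nat.rec [] (fun _ L => L ++ [bfun L]) n, rfl, fun n => rfl⟩
  obtain ⟨b, hbdef⟩ : ∃ b : ℕ → X, ∀ n, b n = bfun (bl n) := ⟨_, fun n => rfl⟩
  have hbl_eq : ∀ n, bl n = (List.range n).map b := by
    intro n
    induction n with
    | zero => rw [hbl0]; rfl
    | succ n ih =>
      rw [hblsucc, ← hbdef n, ih, List.range_succ, List.map_append]
      simp
  have hbl_len : ∀ n, (bl n).length = n := by
    intro n; rw [hbl_eq]; simp
  have hbl_take : ∀ i n, i ≤ n → (bl n).take i = bl i := by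
    intro i n hin
    rw [hbl_eq, hbl_eq, ← List.map_take, List.take_range, min_eq_left hin]
  have hbl_mem : ∀ (x : X) (n : ℕ), x ∈ bl n ↔ ∃ j < n, b j = x := by
    intro x n; rw [hbl_eq]; simp [List.mem_map]
  -- the basic specifications
  have hfnorm : ∀ i, ‖ffun (bl i)‖ ≤ 1 + θ := fun i => hffun1 _
  have hfF : ∀ i, F (ffun (bl i)) = 1 := fun i => hffun2 _
  have hfb0 : ∀ i n, n < i → ffun (bl i) (b n) = 0 :=
    fun i n hni => hffun3 _ _ ((hbl_mem (b n) i).mpr ⟨n, hni, rfl⟩)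
  have hmem_flist_f : ∀ i n, i ≤ n → ffun (bl i) ∈ flist (bl n) := by
    intro i n hin
    rw [hflist]
    apply List.mem_append_left
    refine List.mem_map.mpr ⟨i, ?_, ?_⟩
    · rw [List.mem_range, hbl_len]; omega
    · rw [hbl_take i n hin]
  have hfb1 : ∀ i n, i ≤ n → ffun (bl i) (b n) = 1 := by
    intro i n hin
    have h := hbfun2 (bl n) _ (hmem_flist_f i n hin)
    rw [hbdef, h, hfF]
  have hHb : ∀ i n, i ≤ n → ∀ h ∈ Hfun (bl i), h (b n) = F h := by
    intro i n hin h hh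
    have hmem : h ∈ flist (bl n) := by
      rw [hflist]
      apply List.mem_append_right
      rw [List.mem_flatten]
      refine ⟨Hlist (bl i), ?_, (hHlist_mem _ h).mpr hh⟩
      refine List.mem_map.mpr ⟨i, ?_, ?_⟩
      · rw [List.mem_range, hbl_len]; omega
      · rw [hbl_take i n hin]
    have h2 := hbfun2 (bl n) _ hmem
    rw [hbdef, h2]
  have hbnorm : ∀ n, ‖b n‖ ≤ 1 + θ := fun n => by rw [hbdef]; exact hbfun1 _
  have hTb : ∀ n, ‖T (b n) - y‖ < (1/2 : ℝ) ^ n := by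
    intro n
    have := hbfun3 (bl n)
    rw [hbl_len] at this
    rw [hbdef]
    exact this
  -- the lower estimate (c)
  have key_c : ∀ (c : ℕ → ℝ) (k n : ℕ), k ≤ n →
      |∑ j ∈ Finset.Ico k n, c j| ≤ (1 + θ) * ‖∑ j ∈ Finset.range n, c j • b j‖ := by
    intro c k n hkn
    set S := ∑ j ∈ Finset.range n, c j • b j with hS
    have hcompute : ffun (bl k) S = ∑ j ∈ Finset.Ico k n, c j := by
      rw [hS, map_sum]
      have h1 : ∀ j ∈ Finset.range n, ffun (bl k) (c j • b j) = if k ≤ j then c j else 0 := by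
        intro j _
        rw [map_smul, smul_eq_mul]
        by_cases h : k ≤ j
        · rw [if_pos h, hfb1 k j h, mul_one]
        · rw [if_neg h, hfb0 k j (not_le.mp h), mul_zero]
      rw [Finset.sum_congr rfl h1, Finset.sum_ite, Finset.sum_const_zero, add_zero]
      apply Finset.sum_congr _ (fun _ _ => rfl)
      ext j
      simp only [Finset.mem_filter, Finset.mem_range, Finset.mem_Ico]
      tauto
    rw [← hcompute]
    calc |ffun (bl k) S| = ‖ffun (bl k) S‖ := rfl
      _ ≤ ‖ffun (bl k)‖ * ‖S‖ := (ffun (bl k)).le_opNorm S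
      _ ≤ (1 + θ) * ‖S‖ := mul_le_mul_of_nonneg_right (hfnorm k) (norm_nonneg S)
  -- the basic-sequence estimate (a)
  have key_a : ∀ (c : ℕ → ℝ) (k n : ℕ), k ≤ n →
      ‖∑ j ∈ Finset.range k, c j • b j‖ ≤
        2 * (1 + ε) * ‖∑ j ∈ Finset.range n, c j • b j‖ := by
    intro c k n hkn
    obtain ⟨w, hw0, hwsucc⟩ : ∃ w : ℕ → Dual ℝ (Dual ℝ X), w 0 = F ∧
        ∀ j, w (j + 1) = F - J (b j) :=
      ⟨fun m => Nat.rec F (fun j _ => F - J (b j)) m, rfl, fun j => rfl⟩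
    obtain ⟨a, ha0, hasucc⟩ : ∃ a : ℕ → ℝ, a 0 = (∑ j ∈ Finset.range n, c j) ∧
        ∀ j, a (j + 1) = - c j :=
      ⟨fun m => Nat.rec (∑ j ∈ Finset.range n, c j) (fun j _ => - c j) m, rfl, fun j => rfl⟩
    set P : ℕ → Dual ℝ (Dual ℝ X) := fun m => ∑ j ∈ Finset.range m, a j • w j with hP
    have claim1 : ∀ m, m ≤ n → P (m + 1) =
        (∑ j ∈ Finset.Ico m n, c j) • F + J (∑ j ∈ Finset.range m, c j • b j) := by
      intro m hmn
      rw [hP]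
      simp only
      rw [Finset.sum_range_succ']
      have h1 : ∀ j, a (j + 1) • w (j + 1) = c j • J (b j) - c j • F := by
        intro j
        rw [hasucc, hwsucc, neg_smul, smul_sub, neg_sub]
      have h2 : J (∑ j ∈ Finset.range m, c j • b j) = ∑ j ∈ Finset.range m, c j • J (b j) := by
        rw [map_sum]
        exact Finset.sum_congr rfl fun j _ => by rw [map_smul]
      simp only [h1]
      rw [h2, Finset.sum_Ico_eq_sub _ hmn, Finset.sum_sub_distrib, sub_smul, ha0, hw0,
        ← Finset.sum_smul]
      abel
    have hstep : ∀ m, Cc (m + 1) * ‖P m‖ ≤ Cc m * ‖P (m + 1)‖ := by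
      intro m
      rcases m with _ | l
      · have : P 0 = 0 := by rw [hP]; simp
        rw [this, norm_zero, mul_zero]
        exact mul_nonneg (by linarith [hCc1 0]) (norm_nonneg _)
      · have hmem : P (l + 1) ∈ Submodule.span ℝ ({F} ∪ ⇑J '' {x | x ∈ bl l}) := by
          apply Submodule.sum_mem
          intro j hj
          rw [Finset.mem_range] at hj
          apply Submodule.smul_mem
          rcases j with _ | i
          · rw [hw0]
            exact Submodule.subset_span (Or.inl rfl)
          · have hi : i < l := by omega
            rw [hwsucc]
            exact Submodule.sub_mem _ (Submodule.subset_span (Or.inl rfl))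
              (Submodule.subset_span (Or.inr ⟨b i, (hbl_mem _ _).mpr ⟨i, hi, rfl⟩, rfl⟩))
        have hnorm := hHfun_norm (bl l)
        rw [hbl_len] at hnorm
        obtain ⟨h, hhH, hhineq⟩ := hnorm _ hmem
        have hwh : (w (l + 1)) h = 0 := by
          rw [hwsucc]
          have h1 : (F - J (b l)) h = F h - J (b l) h := rfl
          have h2 : J (b l) h = h (b l) := rfl
          rw [h1, h2, hHb l l le_rfl h hhH, sub_self]
        have heval : P (l + 1) h = P (l + 2) h := by
          have hsum : P (l + 2) = P (l + 1) + a (l + 1) • w (l + 1) := by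
            rw [hP]; simp only; rw [Finset.sum_range_succ]
          rw [hsum]
          have : (P (l + 1) + a (l + 1) • w (l + 1)) h
              = P (l + 1) h + a (l + 1) * ((w (l + 1)) h) := rfl
          rw [this, hwh, mul_zero, add_zero]
        have hPle : P (l + 1) h ≤ ‖P (l + 2)‖ := by
          rw [heval]
          calc P (l + 2) h ≤ |P (l + 2) h| := le_abs_self _
            _ ≤ ‖P (l + 2)‖ * ‖h‖ := (P (l + 2)).le_opNorm h
            _ ≤ ‖P (l + 2)‖ * 1 :=
                mul_le_mul_of_nonneg_left (hHfun_norm1 (bl l) h hhH) (norm_nonneg _)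
            _ = ‖P (l + 2)‖ := mul_one _
        have h1 : Cc (l + 2) / Cc (l + 1) * ‖P (l + 1)‖ ≤ ‖P (l + 2)‖ :=
          le_trans hhineq hPle
        have h2 : (0:ℝ) < Cc (l + 1) := by linarith [hCc1 (l + 1)]
        calc Cc (l + 2) * ‖P (l + 1)‖
            = Cc (l + 1) * (Cc (l + 2) / Cc (l + 1) * ‖P (l + 1)‖) := by
              field_simp
          _ ≤ Cc (l + 1) * ‖P (l + 2)‖ := mul_le_mul_of_nonneg_left h1 h2.le
    have chain : ∀ m' m, m ≤ m' → Cc m' * ‖P m‖ ≤ Cc m * ‖P m'‖ := by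
      intro m'
      induction m' with
      | zero =>
        intro m hm
        have : m = 0 := Nat.le_zero.mp hm
        subst this
        exact le_rfl
      | succ l ih =>
        intro m hm
        rcases eq_or_lt_of_le hm with rfl | h
        · exact le_rfl
        · have hm' : m ≤ l := by omega
          have h1 := ih m hm'
          have h2 := hstep l
          have hCl : (0:ℝ) < Cc l := by linarith [hCc1 l]
          have hCm : (0:ℝ) < Cc m := by linarith [hCc1 m]
          have hCl1 : (0:ℝ) < Cc (l + 1) := by linarith [hCc1 (l + 1)]
          have h3 : Cc (l+1) * (Cc l * ‖P m‖) ≤ Cc (l+1) * (Cc m * ‖P l‖) :=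
            mul_le_mul_of_nonneg_left h1 hCl1.le
          have h4 : Cc m * (Cc (l+1) * ‖P l‖) ≤ Cc m * (Cc l * ‖P (l+1)‖) :=
            mul_le_mul_of_nonneg_left h2 hCm.le
          have h5 : Cc l * (Cc (l+1) * ‖P m‖) ≤ Cc l * (Cc m * ‖P (l+1)‖) := by nlinarith
          exact le_of_mul_le_mul_left h5 hCl
    have hyP : P (n + 1) = J (∑ j ∈ Finset.range n, c j • b j) := by
      rw [claim1 n le_rfl, Finset.Ico_self, Finset.sum_empty, zero_smul, zero_add]
    have hJSk : J (∑ j ∈ Finset.range k, c j • b j) =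
        P (k + 1) - (∑ j ∈ Finset.Ico k n, c j) • F := by
      rw [claim1 k hkn]; abel
    have h1 : ‖P (k + 1)‖ ≤ (1 + θ) * ‖∑ j ∈ Finset.range n, c j • b j‖ := by
      have hc := chain (n + 1) (k + 1) (Nat.succ_le_succ hkn)
      rw [hyP, hJnorm] at hc
      have e1 : (1:ℝ) < Cc (n + 1) := hCc1 _
      have e2 : Cc (k + 1) ≤ 1 + θ := hCcle _
      have e3 : (0:ℝ) ≤ ‖P (k + 1)‖ := norm_nonneg _
      have e4 : (0:ℝ) ≤ ‖∑ j ∈ Finset.range n, c j • b j‖ := norm_nonneg _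
      calc ‖P (k + 1)‖ ≤ Cc (n + 1) * ‖P (k + 1)‖ := le_mul_of_one_le_left e3 e1.le
        _ ≤ Cc (k + 1) * ‖∑ j ∈ Finset.range n, c j • b j‖ := hc
        _ ≤ (1 + θ) * ‖∑ j ∈ Finset.range n, c j • b j‖ :=
            mul_le_mul_of_nonneg_right e2 e4
    have h2 := key_c c k n hkn
    have hnormF : ‖F‖ ≤ 1 + θ := hFn.le
    have hSnn : (0:ℝ) ≤ ‖∑ j ∈ Finset.range n, c j • b j‖ := norm_nonneg _
    calc ‖∑ j ∈ Finset.range k, c j • b j‖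
        = ‖J (∑ j ∈ Finset.range k, c j • b j)‖ := (hJnorm _).symm
      _ = ‖P (k + 1) - (∑ j ∈ Finset.Ico k n, c j) • F‖ := by rw [hJSk]
      _ ≤ ‖P (k + 1)‖ + ‖(∑ j ∈ Finset.Ico k n, c j) • F‖ := norm_sub_le _ _
      _ = ‖P (k + 1)‖ + |∑ j ∈ Finset.Ico k n, c j| * ‖F‖ := by
          rw [norm_smul, Real.norm_eq_abs]
      _ ≤ (1 + θ) * ‖∑ j ∈ Finset.range n, c j • b j‖
            + ((1 + θ) * ‖∑ j ∈ Finset.range n, c j • b j‖) * (1 + θ) := by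
          have habs : (0:ℝ) ≤ |∑ j ∈ Finset.Ico k n, c j| := abs_nonneg _
          have hFnn : (0:ℝ) ≤ ‖F‖ := norm_nonneg _
          have hmul : |∑ j ∈ Finset.Ico k n, c j| * ‖F‖
              ≤ ((1 + θ) * ‖∑ j ∈ Finset.range n, c j • b j‖) * (1 + θ) :=
            mul_le_mul h2 hnormF hFnn (by positivity)
          linarith only [h1, hmul]
      _ = ((1 + θ) + (1 + θ) * (1 + θ)) * ‖∑ j ∈ Finset.range n, c j • b j‖ := by ring
      _ ≤ 2 * (1 + ε) * ‖∑ j ∈ Finset.range n, c j • b j‖ := by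
          have hfinal : ((1 + θ) + (1 + θ) * (1 + θ)) ≤ 2 * (1 + ε) := by
            nlinarith only [hθ0, hθε, hθ1]
          exact mul_le_mul_of_nonneg_right hfinal hSnn
  refine ⟨b, ⟨key_a, fun j => le_trans (hbnorm j) (by linarith only [hθ0, hθε]), ?_⟩, y, ?_⟩
  · intro c k n hkn
    refine le_trans (key_c c k n hkn) ?_
    exact mul_le_mul_of_nonneg_right (by linarith only [hθ0, hθε] : (1 + θ : ℝ) ≤ 1 + ε)
      (norm_nonneg _)
  · rw [tendsto_iff_norm_sub_tendsto_zero]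
    apply squeeze_zero (fun n => norm_nonneg _) (fun n => (hTb n).le)
    exact tendsto_pow_atTop_nhds_zero_of_lt_one (by norm_num) (by norm_num)
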